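/- arXiv:2301.13109 — 2 statements merged into one kernel-verified Lean document; each statement's English description precedes it below -/
import Mathlib

section
/- Let d ≥ 1, σ > d/2 and τ ∈ ℝ, and let v, w ∈ H^σ(𝕋^d). Then w = e^{iτΔ}v + ψ_E^{τ/2}(v) + ψ_I^{τ/2}(w) holds if and only if v = e^{−iτΔ}w + ψ_E^{(−τ)/2}(w) + ψ_I^{(−τ)/2}(v), where ψ_E^{(−τ)/2} and ψ_I^{(−τ)/2} are given by the same formulas with τ replaced by −τ, namely ψ_E^{(−τ)/2}(w) = i(τ/2) e^{−iτΔ}(w² φ₁(iτΔ)w̄) and ψ_I^{(−τ)/2}(v) = i(τ/2)(v² φ₁(−iτΔ)v̄). In other words, the symmetric low-regularity scheme satisfies the discrete time-reversibility property φ^τ = (φ^{−τ})^{−1}. -/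
open Complex Filter MeasureTheory Set

noncomputable section

/-- A function on the torus `𝕋^d`, identified with its sequence of Fourier coefficients. -/
abbrev TSeq (d : ℕ) := (Fin d → ℤ) → ℂ

/-- `|k|² = k₁² + ⋯ + k_d²`. -/
def nsq {d : ℕ} (k : Fin d → ℤ) : ℝ := ∑ i, ((k i : ℝ)) ^ 2

/-- Sobolev weight `1 + |k|^{2s}`. -/
def wt (d : ℕ) (s : ℝ) (k : Fin d → ℤ) : ℝ := 1 + nsq k ^ s

/-- Membership in `H^s(𝕋^d)`. -/
def InHs (d : ℕ) (s : ℝ) (a : TSeq d) : Prop :=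
  Summable fun k => wt d s k * ‖a k‖ ^ 2

/-- The `H^s(𝕋^d)` norm; `‖·‖_{L²} = Hnorm d 0`. -/
def Hnorm (d : ℕ) (s : ℝ) (a : TSeq d) : ℝ :=
  Real.sqrt (∑' k, wt d s k * ‖a k‖ ^ 2)

/-- Free Schrödinger group `e^{itΔ}`: `(e^{itΔ}a)_k = e^{−it|k|²} a_k`. -/
def sgroup (d : ℕ) (t : ℝ) (a : TSeq d) : TSeq d :=
  fun k => Complex.exp (-Complex.I * ((t * nsq k : ℝ) : ℂ)) * a k

/-- `φ₁(z) = (e^z − 1)/z`, `φ₁(0) = 1`. -/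
def phi1 (z : ℂ) : ℂ := if z = 0 then 1 else (Complex.exp z - 1) / z

/-- `φ₁(iτΔ)`: multiplication by `φ₁(−iτ|k|²)`; `φ₁(−iτΔ)` is `phi1Op d (-τ)`. -/
def phi1Op (d : ℕ) (τ : ℝ) (a : TSeq d) : TSeq d :=
  fun k => phi1 (-Complex.I * ((τ * nsq k : ℝ) : ℂ)) * a k

/-- Product of functions = convolution of Fourier coefficients. -/
def convSeq (d : ℕ) (a b : TSeq d) : TSeq d := fun k => ∑' l, a l * b (k - l)

/-- Complex conjugation: `(ā)_k = conj (a_{−k})`. -/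
def conjSeq (d : ℕ) (a : TSeq d) : TSeq d := fun k => (starRingEnd ℂ) (a (-k))

/-- Cubic nonlinearity `f(u,ū) = −i u² ū`. -/
def nonlin (d : ℕ) (a : TSeq d) : TSeq d :=
  fun k => -Complex.I * convSeq d (convSeq d a a) (conjSeq d a) k

/-- `ψ_E^{τ/2}(v) = −i(τ/2) e^{iτΔ}(v² φ₁(−iτΔ) v̄)`. -/
def psiE (d : ℕ) (τ : ℝ) (v : TSeq d) : TSeq d :=
  fun k => -Complex.I * ((τ / 2 : ℝ) : ℂ) *
    sgroup d τ (convSeq d (convSeq d v v) (phi1Op d (-τ) (conjSeq d v))) k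

/-- `ψ_I^{τ/2}(w) = −i(τ/2) (w² φ₁(iτΔ) w̄)`. -/
def psiI (d : ℕ) (τ : ℝ) (w : TSeq d) : TSeq d :=
  fun k => -Complex.I * ((τ / 2 : ℝ) : ℂ) *
    convSeq d (convSeq d w w) (phi1Op d τ (conjSeq d w)) k

/-- `S_v(z) = e^{iτΔ}v + ψ_E^{τ/2}(v) + ψ_I^{τ/2}(z)`. -/
def Sv (d : ℕ) (τ : ℝ) (v z : TSeq d) : TSeq d :=
  fun k => sgroup d τ v k + psiE d τ v k + psiI d τ z k

/-- `Φ` is the `H^σ`-limit of the iterates `S_v^j(e^{iτΔ}v)`, i.e. `Φ = φ^τ(v)`. -/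
def SchemeLim (d : ℕ) (τ σ : ℝ) (v Φ : TSeq d) : Prop :=
  Tendsto (fun j => Hnorm d σ ((Sv d τ v)^[j] (sgroup d τ v) - Φ)) atTop (nhds 0)

/-- `Φ` is a fixed point of `S_v`, i.e. solves the implicit equation of the scheme. -/
def FixedPt (d : ℕ) (τ : ℝ) (v Φ : TSeq d) : Prop := Φ = Sv d τ v Φ

/-- Mild solution of the cubic NLS `i∂ₜu = −Δu + |u|²u` on `[0,T]` with values in `H^α(𝕋^d)`:
continuity in `H^α` and the Duhamel formula (stated coefficientwise, which is equivalent to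
the Bochner-integral formulation in `L²`). -/
def IsMildSol (d : ℕ) (T α : ℝ) (u : ℝ → TSeq d) : Prop :=
  (∀ t ∈ Icc (0:ℝ) T, InHs d α (u t)) ∧
  (∀ t ∈ Icc (0:ℝ) T,
      Tendsto (fun t' => Hnorm d α (u t' - u t)) (nhdsWithin t (Icc (0:ℝ) T)) (nhds 0)) ∧
  (∀ t ∈ Icc (0:ℝ) T, ∀ k, u t k =
      Complex.exp (-Complex.I * ((t * nsq k : ℝ) : ℂ)) * u 0 k +
      ∫ s in (0:ℝ)..t, Complex.exp (-Complex.I * (((t - s) * nsq k : ℝ) : ℂ)) * nonlin d (u s) k)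

lemma step_rev (d : ℕ) (τ : ℝ) (v w : TSeq d) (k : Fin d → ℤ)
    (h : w k = sgroup d τ v k + psiE d τ v k + psiI d τ w k) :
    v k = sgroup d (-τ) w k + psiE d (-τ) w k + psiI d (-τ) v k := by
  simp only [sgroup, psiE, psiI, neg_neg] at h ⊢
  set E1 := Complex.exp (-Complex.I * ((τ * nsq k : ℝ) : ℂ)) with hE1
  set E2 := Complex.exp (-Complex.I * ((-τ * nsq k : ℝ) : ℂ)) with hE2
  have hE : E2 * E1 = 1 := by
    rw [hE1, hE2, ← Complex.exp_add, ← Complex.exp_zero]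
    congr 1
    push_cast
    ring
  have hc : (((-τ) / 2 : ℝ) : ℂ) = -((τ / 2 : ℝ) : ℂ) := by push_cast; ring
  rw [h, hc]
  set A := convSeq d (convSeq d v v) (phi1Op d (-τ) (conjSeq d v)) k
  set B := convSeq d (convSeq d w w) (phi1Op d τ (conjSeq d w)) k
  linear_combination (Complex.I * ((τ / 2 : ℝ) : ℂ) * A - v k) * hE

/-- discrete time-reversibility of the symmetric scheme: `w` solves the
implicit step of size `τ` from `v` iff `v` solves the implicit step of size `−τ` from `w`. -/
theorem scheme_time_reversible (d : ℕ) (hd : 1 ≤ d) (σ τ : ℝ) (hσ : (d : ℝ) / 2 < σ)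
    (v w : TSeq d) (hv : InHs d σ v) (hw : InHs d σ w) :
    (∀ k, w k = sgroup d τ v k + psiE d τ v k + psiI d τ w k) ↔
    (∀ k, v k = sgroup d (-τ) w k + psiE d (-τ) w k + psiI d (-τ) v k) := by
  constructor
  · intro h k
    exact step_rev d τ v w k (h k)
  · intro h k
    have := step_rev d (-τ) w v k (h k)
    simpa using this
end
end

section
/- Let d ≥ 1, s ≥ 0 and σ > d/2 with σ ≥ s if s ≤ d/2, and σ = s if s > d/2. There exists a constant c > 0, depending only on d, s and σ, such that for all v, w ∈ H^{max(s,σ)}(𝕋^d): (i) ‖w² w̄‖_{H^s} ≤ c ‖w‖_{H^σ}² ‖w‖_{H^s}, and (ii) ‖v² v̄ − w² w̄‖_{H^s} ≤ c ‖v − w‖_{H^s} ( ‖v‖_{H^σ}² + ‖v‖_{H^σ} ‖w‖_{H^σ} + ‖w‖_{H^σ}² ). -/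
open Complex Filter MeasureTheory Set

noncomputable section

/-!
Everything is reduced to the moduli `|a_k|`, i.e. to convolutions of sequences in `ℝ≥0∞`, where
no summability bookkeeping is needed. With `⟨k⟩ = (1 + |k|²)^{1/2}`, the bilinear estimate
`‖a ⋆ b‖_{H^s} ≲ ‖a‖_{H^s} ‖b‖_{H^σ}` is a Schur test: Peetre's inequality
`⟨l + m⟩^s ≤ 2^s (⟨l⟩^s + ⟨m⟩^s)` bounds the kernel `⟨l + m⟩^s ⟨l⟩^{-s} ⟨m⟩^{-σ}` by
`2^{s+1} max (⟨l⟩^{-σ}, ⟨m⟩^{-σ})`, whose square is summable in `l` uniformly in `l + m` since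
`σ > d/2`. Applied twice it gives the trilinear bound, hence (i). For (ii),
`v²v̄ − w²w̄ = (v − w) v v̄ + w (v − w) v̄ + w² (v̄ − w̄)`, which is legitimate because
`H^σ ⊂ ℓ¹` for `σ > d/2`.
-/

open scoped ENNReal

namespace ENNReal

theorem rpow_le_rpow_of_nonpos {x y : ℝ≥0∞} {t : ℝ} (hxy : x ≤ y) (ht : t ≤ 0) :
    y ^ t ≤ x ^ t := by
  obtain ⟨u, rfl⟩ : ∃ u, t = -u := ⟨-t, (neg_neg t).symm⟩
  rw [rpow_neg, rpow_neg]
  exact ENNReal.inv_le_inv.2 (rpow_le_rpow hxy (by linarith))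

theorem add_sq_le_two_mul (a b : ℝ≥0∞) : (a + b) ^ 2 ≤ 2 * (a ^ 2 + b ^ 2) := by
  have h := rpow_add_le_mul_rpow_add_rpow a b (p := 2) one_le_two
  norm_num [rpow_two] at h
  exact h

theorem tsum_mul_sq_le {ι : Type*} (f g : ι → ℝ≥0∞) :
    (∑' i, f i * g i) ^ 2 ≤ (∑' i, f i ^ 2) * ∑' i, g i ^ 2 := by
  let _ : MeasurableSpace ι := ⊤
  have h := lintegral_mul_le_Lp_mul_Lq (μ := Measure.count) Real.HolderConjugate.two_two
    (measurable_from_top (f := f)).aemeasurable (measurable_from_top (f := g)).aemeasurable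
  simp only [lintegral_count, Pi.mul_apply, rpow_two] at h
  calc (∑' i, f i * g i) ^ 2
      ≤ ((∑' i, f i ^ 2) ^ (1 / 2 : ℝ) * (∑' i, g i ^ 2) ^ (1 / 2 : ℝ)) ^ 2 := by gcongr
    _ = (∑' i, f i ^ 2) * ∑' i, g i ^ 2 := by
      rw [mul_pow, ← rpow_two, ← rpow_two, ← rpow_mul, ← rpow_mul]; norm_num

theorem exists_pos_le_ofReal_sq {C : ℝ≥0∞} (hC : C ≠ ∞) : ∃ c : ℝ, 0 < c ∧ C ≤ .ofReal (c ^ 2) := by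
  refine ⟨C.toReal + 1, by positivity, ?_⟩
  calc C = .ofReal C.toReal := (ofReal_toReal hC).symm
    _ ≤ _ := ofReal_le_ofReal (by nlinarith [C.toReal_nonneg])

theorem le_mul_of_ofReal_sq_le {x y c : ℝ} {C : ℝ≥0∞} (hy : 0 ≤ y) (hc : 0 ≤ c)
    (hC : C ≤ .ofReal (c ^ 2)) (h : .ofReal (x ^ 2) ≤ C * .ofReal (y ^ 2)) : x ≤ c * y := by
  refine le_of_sq_le_sq ((ofReal_le_ofReal_iff (by positivity)).1 ?_) (by positivity)
  calc ENNReal.ofReal (x ^ 2) ≤ .ofReal (c ^ 2) * .ofReal (y ^ 2) := h.trans (by gcongr)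
    _ = .ofReal ((c * y) ^ 2) := by rw [← ofReal_mul (by positivity), mul_pow]

end ENNReal

namespace SobolevTorus

section Convolution

variable {G : Type*} [AddCommGroup G]

def econv (A B : G → ℝ≥0∞) (k : G) : ℝ≥0∞ := ∑' l, A l * B (k - l)

theorem econv_comm (A B : G → ℝ≥0∞) : econv A B = econv B A := by
  funext k
  rw [econv, ← (Equiv.subLeft k).tsum_eq]
  simp [econv, mul_comm]

theorem econv_assoc (A B C : G → ℝ≥0∞) : econv (econv A B) C = econv A (econv B C) := by
  funext k
  calc econv (econv A B) C k = ∑' l, ∑' m, A m * B (l - m) * C (k - l) := by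
        simp only [econv, ← ENNReal.tsum_mul_right]
    _ = ∑' m, ∑' j, A m * B j * C (k - m - j) := by
        rw [ENNReal.tsum_comm]
        refine tsum_congr fun m => ?_
        rw [← (Equiv.addLeft m).tsum_eq]
        simp [sub_sub]
    _ = econv A (econv B C) k := by
        simp only [econv, ← ENNReal.tsum_mul_left, mul_assoc]

theorem tsum_econv (A B : G → ℝ≥0∞) : ∑' k, econv A B k = (∑' k, A k) * ∑' k, B k := by
  simp only [econv]
  rw [ENNReal.tsum_comm, ← ENNReal.tsum_mul_right]
  refine tsum_congr fun l => ?_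
  rw [ENNReal.tsum_mul_left, ← (Equiv.subRight l).tsum_eq B]
  rfl

theorem tsum_sq_tsum_kernel_le (K : G → G → ℝ≥0∞) (F H : G → ℝ≥0∞) {M : ℝ≥0∞}
    (hK : ∀ k, ∑' l, K k l ^ 2 ≤ M) :
    ∑' k, (∑' l, K k l * F l * H (k - l)) ^ 2 ≤ M * ((∑' k, F k ^ 2) * ∑' k, H k ^ 2) := by
  calc ∑' k, (∑' l, K k l * F l * H (k - l)) ^ 2
      ≤ ∑' k, M * econv (F ^ 2) (H ^ 2) k := by
        refine ENNReal.tsum_le_tsum fun k => ?_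
        simp only [mul_assoc]
        refine (ENNReal.tsum_mul_sq_le _ _).trans (mul_le_mul' (hK k) (le_of_eq ?_))
        simp [econv, mul_pow]
    _ = M * ((∑' k, F k ^ 2) * ∑' k, H k ^ 2) := by
        rw [ENNReal.tsum_mul_left, tsum_econv]; rfl

end Convolution

variable {d : ℕ}

theorem nsq_nonneg (k : Fin d → ℤ) : 0 ≤ nsq k := Finset.sum_nonneg fun _ _ => sq_nonneg _

theorem nsq_neg (k : Fin d → ℤ) : nsq (-k) = nsq k := by simp [nsq]

theorem nsq_add_le (k l : Fin d → ℤ) : nsq (k + l) ≤ 2 * (nsq k + nsq l) := by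
  simp only [nsq, Pi.add_apply, Int.cast_add, Finset.mul_sum, ← Finset.sum_add_distrib]
  exact Finset.sum_le_sum fun i _ => by nlinarith [sq_nonneg ((k i : ℝ) - l i)]

def bracket (k : Fin d → ℤ) : ℝ≥0∞ := ENNReal.ofReal √(1 + nsq k)

theorem bracket_ne_zero (k : Fin d → ℤ) : bracket k ≠ 0 := by
  simp [bracket, add_pos_of_pos_of_nonneg one_pos (nsq_nonneg k)]

theorem bracket_ne_top (k : Fin d → ℤ) : bracket k ≠ ∞ := ENNReal.ofReal_ne_top

theorem bracket_rpow_add (k : Fin d → ℤ) (t u : ℝ) :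
    bracket k ^ (t + u) = bracket k ^ t * bracket k ^ u :=
  ENNReal.rpow_add t u (bracket_ne_zero k) (bracket_ne_top k)

theorem bracket_rpow_neg_mul_rpow (k : Fin d → ℤ) (t : ℝ) :
    bracket k ^ (-t) * bracket k ^ t = 1 := by
  rw [← bracket_rpow_add, neg_add_cancel, ENNReal.rpow_zero]

theorem bracket_rpow_sq (k : Fin d → ℤ) (t : ℝ) :
    (bracket k ^ t) ^ 2 = ENNReal.ofReal ((1 + nsq k) ^ t) := by
  have hpos : 0 < 1 + nsq k := add_pos_of_pos_of_nonneg one_pos (nsq_nonneg k)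
  rw [bracket, ENNReal.ofReal_rpow_of_pos (Real.sqrt_pos.2 hpos),
    ← ENNReal.ofReal_pow (by positivity), Real.sqrt_eq_rpow, ← Real.rpow_mul hpos.le,
    ← Real.rpow_natCast, ← Real.rpow_mul hpos.le]
  congr 2
  ring

theorem bracket_add_le (k l : Fin d → ℤ) : bracket (k + l) ≤ 2 * max (bracket k) (bracket l) := by
  rw [bracket, bracket, bracket, ← ENNReal.ofReal_max, ← ENNReal.ofReal_ofNat 2,
    ← ENNReal.ofReal_mul zero_le_two]
  refine ENNReal.ofReal_le_ofReal (Real.sqrt_le_iff.2 ⟨by positivity, ?_⟩)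
  have hk := nsq_nonneg k
  have hl := nsq_nonneg l
  have hkl := nsq_add_le k l
  rcases le_total (1 + nsq k) (1 + nsq l) with h | h
  · rw [max_eq_right (Real.sqrt_le_sqrt h), mul_pow, Real.sq_sqrt (by linarith)]; linarith
  · rw [max_eq_left (Real.sqrt_le_sqrt h), mul_pow, Real.sq_sqrt (by linarith)]; linarith

theorem bracket_add_rpow_le {t : ℝ} (ht : 0 ≤ t) (k l : Fin d → ℤ) :
    bracket (k + l) ^ t ≤ 2 ^ t * (bracket k ^ t + bracket l ^ t) :=
  calc bracket (k + l) ^ t ≤ (2 * max (bracket k) (bracket l)) ^ t :=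
        ENNReal.rpow_le_rpow (bracket_add_le k l) ht
    _ = 2 ^ t * max (bracket k ^ t) (bracket l ^ t) := by
        rw [ENNReal.mul_rpow_of_nonneg _ _ ht, ENNReal.max_rpow ht]
    _ ≤ 2 ^ t * (bracket k ^ t + bracket l ^ t) := by gcongr; exact max_le le_self_add le_add_self

theorem bracket_rpow_neg_mul_rpow_le {s σ : ℝ} (hs : 0 ≤ s) (hsσ : s ≤ σ) (l m : Fin d → ℤ) :
    bracket l ^ (-s) * bracket m ^ (s - σ) ≤ max (bracket l ^ (-σ)) (bracket m ^ (-σ)) := by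
  rcases le_total (bracket l) (bracket m) with h | h
  · calc bracket l ^ (-s) * bracket m ^ (s - σ) ≤ bracket l ^ (-s) * bracket l ^ (s - σ) :=
          mul_le_mul_right (ENNReal.rpow_le_rpow_of_nonpos h (by linarith)) _
      _ ≤ _ := by rw [← bracket_rpow_add, show -s + (s - σ) = -σ by ring]; exact le_max_left _ _
  · calc bracket l ^ (-s) * bracket m ^ (s - σ) ≤ bracket m ^ (-s) * bracket m ^ (s - σ) :=
          mul_le_mul_left (ENNReal.rpow_le_rpow_of_nonpos h (by linarith)) _
      _ ≤ _ := by rw [← bracket_rpow_add, show -s + (s - σ) = -σ by ring]; exact le_max_right _ _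

theorem summable_one_add_sq_rpow_neg {p : ℝ} (hp : 1 / 2 < p) :
    Summable fun n : ℤ => (1 + (n : ℝ) ^ 2) ^ (-p) := by
  refine Summable.of_norm_bounded_eventually
    (Real.summable_abs_int_rpow (b := 2 * p) (by linarith)) ?_
  filter_upwards [(Set.finite_singleton (0 : ℤ)).compl_mem_cofinite] with n hn
  have hn0 : (0 : ℝ) < (n : ℝ) ^ 2 := by
    have : (n : ℝ) ≠ 0 := Int.cast_ne_zero.2 hn
    positivity
  calc ‖(1 + (n : ℝ) ^ 2) ^ (-p)‖ = (1 + (n : ℝ) ^ 2) ^ (-p) :=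
        Real.norm_of_nonneg (by positivity)
    _ ≤ ((n : ℝ) ^ 2) ^ (-p) := Real.rpow_le_rpow_of_nonpos hn0 (by linarith) (by linarith)
    _ = |(n : ℝ)| ^ (-(2 * p)) := by
        rw [← sq_abs, ← Real.rpow_natCast, ← Real.rpow_mul (abs_nonneg _)]
        norm_num

theorem summable_prod_one_add_sq_rpow_neg {p : ℝ} (hp : 1 / 2 < p) (m : ℕ) :
    Summable fun k : Fin m → ℤ => ∏ i, (1 + (k i : ℝ) ^ 2) ^ (-p) := by
  induction m with
  | zero => exact Summable.of_finite
  | succ m ih =>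
    refine (Fin.consEquiv fun _ => ℤ).summable_iff.1 ?_
    refine ((summable_one_add_sq_rpow_neg hp).mul_of_nonneg ih (fun _ => by positivity)
      fun _ => by positivity).congr fun x => ?_
    simp [Fin.prod_univ_succ]

theorem summable_one_add_nsq_rpow_neg {σ : ℝ} (hσ : (d : ℝ) / 2 < σ) :
    Summable fun k : Fin d → ℤ => (1 + nsq k) ^ (-σ) := by
  have hd : (0 : ℝ) < d + 1 := by positivity
  obtain ⟨p, hp, hdp⟩ : ∃ p : ℝ, 1 / 2 < p ∧ d * p ≤ σ := by
    refine ⟨1 / 2 + (σ - d / 2) / (d + 1), ?_, ?_⟩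
    · have := div_pos (sub_pos.2 hσ) hd
      linarith
    · have : d * ((σ - d / 2) / (d + 1)) ≤ σ - d / 2 := by
        rw [mul_div_assoc', div_le_iff₀ hd]; nlinarith
      rw [mul_add]; linarith
  refine (summable_prod_one_add_sq_rpow_neg hp d).of_nonneg_of_le
    (fun k => Real.rpow_nonneg (by linarith [nsq_nonneg k]) _) fun k => ?_
  have h1 : 1 ≤ 1 + nsq k := by linarith [nsq_nonneg k]
  have hprod : ∏ i, (1 + (k i : ℝ) ^ 2) ≤ (1 + nsq k) ^ d := by
    calc ∏ i, (1 + (k i : ℝ) ^ 2) ≤ ∏ _i : Fin d, (1 + nsq k) :=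
          Finset.prod_le_prod (fun i _ => by positivity) fun i _ => by
            have := Finset.single_le_sum (f := fun j => (k j : ℝ) ^ 2)
              (fun j _ => sq_nonneg _) (Finset.mem_univ i)
            simp only [nsq]; linarith
      _ = (1 + nsq k) ^ d := by simp
  calc (1 + nsq k) ^ (-σ) ≤ (1 + nsq k) ^ (-(d * p)) :=
        Real.rpow_le_rpow_of_exponent_le h1 (by linarith)
    _ = ((1 + nsq k) ^ d) ^ (-p) := by
        rw [← Real.rpow_natCast, ← Real.rpow_mul (by linarith)]; ring_nf
    _ ≤ (∏ i, (1 + (k i : ℝ) ^ 2)) ^ (-p) :=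
        Real.rpow_le_rpow_of_nonpos (Finset.prod_pos fun i _ => by positivity) hprod
          (by linarith)
    _ = ∏ i, (1 + (k i : ℝ) ^ 2) ^ (-p) :=
        (Real.finsetProd_rpow _ _ (fun i _ => by positivity) _).symm

def sobolevSq (t : ℝ) (A : (Fin d → ℤ) → ℝ≥0∞) : ℝ≥0∞ := ∑' k, (bracket k ^ t * A k) ^ 2

def bracketSum (d : ℕ) (σ : ℝ) : ℝ≥0∞ := ∑' k : Fin d → ℤ, (bracket k ^ (-σ)) ^ 2

theorem bracketSum_ne_top {σ : ℝ} (hσ : (d : ℝ) / 2 < σ) : bracketSum d σ ≠ ∞ := by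
  simp_rw [bracketSum, bracket_rpow_sq]
  rw [← ENNReal.ofReal_tsum_of_nonneg (fun k => Real.rpow_nonneg (by linarith [nsq_nonneg k]) _)
    (summable_one_add_nsq_rpow_neg hσ)]
  exact ENNReal.ofReal_ne_top

theorem tsum_sq_le_bracketSum_mul_sobolevSq (σ : ℝ) (A : (Fin d → ℤ) → ℝ≥0∞) :
    (∑' k, A k) ^ 2 ≤ bracketSum d σ * sobolevSq σ A := by
  calc (∑' k, A k) ^ 2 = (∑' k, bracket k ^ (-σ) * (bracket k ^ σ * A k)) ^ 2 := by
        simp_rw [← mul_assoc, bracket_rpow_neg_mul_rpow, one_mul]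
    _ ≤ _ := ENNReal.tsum_mul_sq_le _ _

theorem peetre_kernel_le {s σ : ℝ} (hs : 0 ≤ s) (hsσ : s ≤ σ) (l m : Fin d → ℤ) :
    bracket (l + m) ^ s * bracket l ^ (-s) * bracket m ^ (-σ) ≤
      2 ^ s * 2 * max (bracket l ^ (-σ)) (bracket m ^ (-σ)) := by
  have hl := bracket_rpow_neg_mul_rpow l s
  have hm : bracket m ^ s * bracket m ^ (-σ) = bracket m ^ (s - σ) := by
    rw [← bracket_rpow_add, sub_eq_add_neg]
  calc bracket (l + m) ^ s * bracket l ^ (-s) * bracket m ^ (-σ)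
      ≤ 2 ^ s * (bracket l ^ s + bracket m ^ s) * bracket l ^ (-s) * bracket m ^ (-σ) := by
        gcongr; exact bracket_add_rpow_le hs l m
    _ = 2 ^ s * (bracket m ^ (-σ) * (bracket l ^ (-s) * bracket l ^ s) +
          bracket l ^ (-s) * (bracket m ^ s * bracket m ^ (-σ))) := by ring
    _ = 2 ^ s * (bracket m ^ (-σ) + bracket l ^ (-s) * bracket m ^ (s - σ)) := by
        rw [hl, hm, mul_one]
    _ ≤ 2 ^ s * (max (bracket l ^ (-σ)) (bracket m ^ (-σ)) +
          max (bracket l ^ (-σ)) (bracket m ^ (-σ))) := by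
        gcongr
        · exact le_max_right _ _
        · exact bracket_rpow_neg_mul_rpow_le hs hsσ l m
    _ = 2 ^ s * 2 * max (bracket l ^ (-σ)) (bracket m ^ (-σ)) := by ring

theorem tsum_peetre_kernel_sq_le {s σ : ℝ} (hs : 0 ≤ s) (hsσ : s ≤ σ) (k : Fin d → ℤ) :
    ∑' l, (bracket k ^ s * bracket l ^ (-s) * bracket (k - l) ^ (-σ)) ^ 2 ≤
      8 * 4 ^ s * bracketSum d σ := by
  have h4 : (2 ^ s * 2 : ℝ≥0∞) ^ 2 = 4 * 4 ^ s := by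
    rw [mul_pow, ← ENNReal.rpow_two, ← ENNReal.rpow_mul, mul_comm s, ENNReal.rpow_mul]
    norm_num [mul_comm]
  calc ∑' l, (bracket k ^ s * bracket l ^ (-s) * bracket (k - l) ^ (-σ)) ^ 2
      ≤ ∑' l, 4 * 4 ^ s * ((bracket l ^ (-σ)) ^ 2 + (bracket (k - l) ^ (-σ)) ^ 2) := by
        refine ENNReal.tsum_le_tsum fun l => ?_
        have hk := peetre_kernel_le hs hsσ l (k - l)
        rw [add_sub_cancel] at hk
        calc _ ≤ (2 ^ s * 2 * max (bracket l ^ (-σ)) (bracket (k - l) ^ (-σ))) ^ 2 := by gcongr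
          _ ≤ _ := by
            rw [mul_pow, h4]
            gcongr
            rcases le_total (bracket l ^ (-σ)) (bracket (k - l) ^ (-σ)) with h | h <;> simp [h]
    _ = 8 * 4 ^ s * bracketSum d σ := by
        have hshift : ∑' l, (bracket (k - l) ^ (-σ)) ^ 2 = bracketSum d σ :=
          (Equiv.subLeft k).tsum_eq fun l => (bracket l ^ (-σ)) ^ 2
        rw [ENNReal.tsum_mul_left, ENNReal.tsum_add, hshift, ← bracketSum]
        ring

theorem sobolevSq_econv_le {s σ : ℝ} (hs : 0 ≤ s) (hsσ : s ≤ σ) (A B : (Fin d → ℤ) → ℝ≥0∞) :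
    sobolevSq s (econv A B) ≤ 8 * 4 ^ s * bracketSum d σ * (sobolevSq s A * sobolevSq σ B) := by
  have hsplit : ∀ k, bracket k ^ s * econv A B k = ∑' l,
      bracket k ^ s * bracket l ^ (-s) * bracket (k - l) ^ (-σ) *
        (bracket l ^ s * A l) * (bracket (k - l) ^ σ * B (k - l)) := by
    intro k
    rw [econv, ← ENNReal.tsum_mul_left]
    refine tsum_congr fun l => ?_
    calc bracket k ^ s * (A l * B (k - l))
        = bracket k ^ s * (bracket l ^ (-s) * bracket l ^ s) *
            (bracket (k - l) ^ (-σ) * bracket (k - l) ^ σ) * (A l * B (k - l)) := by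
          rw [bracket_rpow_neg_mul_rpow, bracket_rpow_neg_mul_rpow, mul_one, mul_one]
      _ = _ := by ring
  rw [sobolevSq]
  simp_rw [hsplit]
  exact tsum_sq_tsum_kernel_le _ _ _ (tsum_peetre_kernel_sq_le hs hsσ)

theorem sobolevSq_econv_econv_le {s σ : ℝ} (hs : 0 ≤ s) (hsσ : s ≤ σ)
    (A B C : (Fin d → ℤ) → ℝ≥0∞) :
    sobolevSq s (econv (econv A B) C) ≤
      (8 * 4 ^ s * bracketSum d σ) ^ 2 * (sobolevSq s A * sobolevSq σ B * sobolevSq σ C) :=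
  calc sobolevSq s (econv (econv A B) C)
      ≤ 8 * 4 ^ s * bracketSum d σ * (sobolevSq s (econv A B) * sobolevSq σ C) :=
        sobolevSq_econv_le hs hsσ _ _
    _ ≤ 8 * 4 ^ s * bracketSum d σ *
          ((8 * 4 ^ s * bracketSum d σ * (sobolevSq s A * sobolevSq σ B)) * sobolevSq σ C) := by
        gcongr; exact sobolevSq_econv_le hs hsσ _ _
    _ = _ := by ring

theorem tsum_ne_top_of_sobolevSq_ne_top {σ : ℝ} (hσ : (d : ℝ) / 2 < σ)
    {A : (Fin d → ℤ) → ℝ≥0∞} (hA : sobolevSq σ A ≠ ∞) : ∑' k, A k ≠ ∞ := by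
  have h := (tsum_sq_le_bracketSum_mul_sobolevSq σ A).trans_lt
    (ENNReal.mul_lt_top (bracketSum_ne_top hσ).lt_top hA.lt_top)
  simpa using h.ne

theorem wt_nonneg (t : ℝ) (k : Fin d → ℤ) : 0 ≤ wt d t k :=
  add_nonneg zero_le_one (Real.rpow_nonneg (nsq_nonneg k) t)

theorem wt_neg (t : ℝ) (k : Fin d → ℤ) : wt d t (-k) = wt d t k := by simp [wt, nsq_neg]

theorem ofReal_wt_le {t : ℝ} (ht : 0 ≤ t) (k : Fin d → ℤ) :
    ENNReal.ofReal (wt d t k) ≤ 2 * (bracket k ^ t) ^ 2 := by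
  have hn := nsq_nonneg k
  rw [bracket_rpow_sq, ← ENNReal.ofReal_ofNat 2, ← ENNReal.ofReal_mul zero_le_two]
  refine ENNReal.ofReal_le_ofReal ?_
  have h1 : 1 ≤ (1 + nsq k) ^ t := Real.one_le_rpow (by linarith) ht
  have h2 : nsq k ^ t ≤ (1 + nsq k) ^ t := Real.rpow_le_rpow hn (by linarith) ht
  rw [wt]; linarith

theorem bracket_rpow_sq_le {t : ℝ} (ht : 0 ≤ t) (k : Fin d → ℤ) :
    (bracket k ^ t) ^ 2 ≤ 2 ^ t * ENNReal.ofReal (wt d t k) := by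
  have hn := nsq_nonneg k
  rw [bracket_rpow_sq, ← ENNReal.ofReal_ofNat 2, ENNReal.ofReal_rpow_of_nonneg zero_le_two ht,
    ← ENNReal.ofReal_mul (by positivity)]
  refine ENNReal.ofReal_le_ofReal ?_
  rcases le_total (nsq k) 1 with h | h
  · calc (1 + nsq k) ^ t ≤ 2 ^ t := Real.rpow_le_rpow (by linarith) (by linarith) ht
      _ ≤ 2 ^ t * wt d t k := le_mul_of_one_le_right (by positivity)
          (le_add_of_nonneg_right (Real.rpow_nonneg hn t))
  · calc (1 + nsq k) ^ t ≤ (2 * nsq k) ^ t := Real.rpow_le_rpow (by linarith) (by linarith) ht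
      _ = 2 ^ t * nsq k ^ t := Real.mul_rpow zero_le_two hn
      _ ≤ 2 ^ t * wt d t k := by gcongr; exact le_add_of_nonneg_left zero_le_one

theorem ofReal_wt_mul_norm_sq (t : ℝ) (k : Fin d → ℤ) (z : ℂ) :
    ENNReal.ofReal (wt d t k * ‖z‖ ^ 2) = ENNReal.ofReal (wt d t k) * ‖z‖ₑ ^ 2 := by
  rw [ENNReal.ofReal_mul (wt_nonneg t k), ENNReal.ofReal_pow (norm_nonneg z), ofReal_norm]

theorem Hnorm_nonneg (t : ℝ) (a : TSeq d) : 0 ≤ Hnorm d t a := Real.sqrt_nonneg _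

theorem Hnorm_sq (t : ℝ) (a : TSeq d) : Hnorm d t a ^ 2 = ∑' k, wt d t k * ‖a k‖ ^ 2 :=
  Real.sq_sqrt (tsum_nonneg fun k => mul_nonneg (wt_nonneg t k) (sq_nonneg _))

theorem ofReal_Hnorm_sq_le {t : ℝ} (ht : 0 ≤ t) (a : TSeq d) :
    ENNReal.ofReal (Hnorm d t a ^ 2) ≤ 2 * sobolevSq t (‖a ·‖ₑ) := by
  rw [Hnorm_sq]
  by_cases ha : InHs d t a
  · rw [ENNReal.ofReal_tsum_of_nonneg (fun k => mul_nonneg (wt_nonneg t k) (sq_nonneg _)) ha,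
      sobolevSq, ← ENNReal.tsum_mul_left]
    refine ENNReal.tsum_le_tsum fun k => ?_
    rw [ofReal_wt_mul_norm_sq, mul_pow, ← mul_assoc]
    gcongr
    exact ofReal_wt_le ht k
  · rw [InHs] at ha
    simp [tsum_eq_zero_of_not_summable ha]

theorem sobolevSq_le_ofReal_Hnorm_sq {t : ℝ} (ht : 0 ≤ t) {a : TSeq d} (ha : InHs d t a) :
    sobolevSq t (‖a ·‖ₑ) ≤ 2 ^ t * ENNReal.ofReal (Hnorm d t a ^ 2) := by
  rw [Hnorm_sq, ENNReal.ofReal_tsum_of_nonneg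
    (fun k => mul_nonneg (wt_nonneg t k) (sq_nonneg _)) ha, ← ENNReal.tsum_mul_left]
  refine ENNReal.tsum_le_tsum fun k => ?_
  rw [ofReal_wt_mul_norm_sq, mul_pow, ← mul_assoc]
  gcongr
  exact bracket_rpow_sq_le ht k

theorem sobolevSq_mono {t : ℝ} {A B : (Fin d → ℤ) → ℝ≥0∞} (h : ∀ k, A k ≤ B k) :
    sobolevSq t A ≤ sobolevSq t B :=
  ENNReal.tsum_le_tsum fun k => by gcongr; exact h k

theorem sobolevSq_add_le (t : ℝ) (A B : (Fin d → ℤ) → ℝ≥0∞) :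
    sobolevSq t (A + B) ≤ 2 * (sobolevSq t A + sobolevSq t B) := by
  rw [sobolevSq, sobolevSq, sobolevSq, ← ENNReal.tsum_add, ← ENNReal.tsum_mul_left]
  refine ENNReal.tsum_le_tsum fun k => ?_
  rw [Pi.add_apply, mul_add]
  exact ENNReal.add_sq_le_two_mul _ _

theorem sobolevSq_add_add_le (t : ℝ) (A B C : (Fin d → ℤ) → ℝ≥0∞) :
    sobolevSq t (A + B + C) ≤ 4 * (sobolevSq t A + sobolevSq t B + sobolevSq t C) :=
  calc sobolevSq t (A + B + C) ≤ 2 * (2 * (sobolevSq t A + sobolevSq t B) + sobolevSq t C) := by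
        grw [sobolevSq_add_le, sobolevSq_add_le]
    _ = 4 * (sobolevSq t A + sobolevSq t B) + 2 * sobolevSq t C := by ring
    _ ≤ 4 * (sobolevSq t A + sobolevSq t B) + 4 * sobolevSq t C := by gcongr; norm_num
    _ = _ := by ring

theorem enorm_convSeq_le (a b : TSeq d) (k : Fin d → ℤ) :
    ‖convSeq d a b k‖ₑ ≤ econv (‖a ·‖ₑ) (‖b ·‖ₑ) k :=
  enorm_tsum_le_tsum_enorm.trans_eq (tsum_congr fun _ => enorm_mul _ _)

theorem enorm_convSeq_convSeq_le (a b c : TSeq d) (k : Fin d → ℤ) :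
    ‖convSeq d (convSeq d a b) c k‖ₑ ≤ econv (econv (‖a ·‖ₑ) (‖b ·‖ₑ)) (‖c ·‖ₑ) k :=
  (enorm_convSeq_le _ _ k).trans
    (ENNReal.tsum_le_tsum fun l => mul_le_mul_left (enorm_convSeq_le a b l) _)

theorem _root_.InHs.conjSeq {t : ℝ} {a : TSeq d} (ha : InHs d t a) : InHs d t (conjSeq d a) :=
  ((Equiv.neg _).summable_iff.2 ha).congr fun k => by simp [_root_.conjSeq, wt_neg]

theorem Hnorm_conjSeq (t : ℝ) (a : TSeq d) : Hnorm d t (conjSeq d a) = Hnorm d t a := by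
  rw [Hnorm, Hnorm, ← (Equiv.neg _).tsum_eq]
  simp [conjSeq, wt_neg]

theorem _root_.InHs.mono {s σ : ℝ} (hs : 0 ≤ s) (hsσ : s ≤ σ) {a : TSeq d} (ha : InHs d σ a) :
    InHs d s a := by
  refine (ha.mul_left 2).of_nonneg_of_le (fun k => mul_nonneg (wt_nonneg s k) (sq_nonneg _))
    fun k => ?_
  have hwt : wt d s k ≤ 2 * wt d σ k := by
    have hn := nsq_nonneg k
    have hσ := Real.rpow_nonneg hn σ
    rcases le_total (nsq k) 1 with h | h
    · have := Real.rpow_le_one hn h hs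
      rw [wt, wt]; linarith
    · have := Real.rpow_le_rpow_of_exponent_le h hsσ
      rw [wt, wt]; linarith
  nlinarith [sq_nonneg ‖a k‖]

theorem _root_.InHs.sub {t : ℝ} {a b : TSeq d} (ha : InHs d t a) (hb : InHs d t b) :
    InHs d t (a - b) := by
  refine ((ha.mul_left 2).add (hb.mul_left 2)).of_nonneg_of_le
    (fun k => mul_nonneg (wt_nonneg t k) (sq_nonneg _)) fun k => ?_
  have h : ‖a k - b k‖ ^ 2 ≤ 2 * ‖a k‖ ^ 2 + 2 * ‖b k‖ ^ 2 :=
    (pow_le_pow_left₀ (norm_nonneg _) (norm_sub_le _ _) 2).trans (add_sq_le.trans_eq (by ring))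
  simp only [Pi.sub_apply]
  nlinarith [wt_nonneg t k]

theorem tsum_enorm_ne_top_of_InHs {σ : ℝ} (hσ : (d : ℝ) / 2 < σ) {a : TSeq d}
    (ha : InHs d σ a) : ∑' k, ‖a k‖ₑ ≠ ∞ :=
  tsum_ne_top_of_sobolevSq_ne_top hσ <| ne_top_of_le_ne_top
    (ENNReal.mul_ne_top (by simp) ENNReal.ofReal_ne_top)
    (sobolevSq_le_ofReal_Hnorm_sq ((by positivity : (0 : ℝ) ≤ d / 2).trans hσ.le) ha)

theorem tsum_enorm_convSeq_le (a b : TSeq d) :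
    ∑' k, ‖convSeq d a b k‖ₑ ≤ (∑' k, ‖a k‖ₑ) * ∑' k, ‖b k‖ₑ :=
  (ENNReal.tsum_le_tsum (enorm_convSeq_le a b)).trans_eq (tsum_econv _ _)

theorem summable_mul_sub {a b : TSeq d} (ha : ∑' k, ‖a k‖ₑ ≠ ∞) (hb : ∑' k, ‖b k‖ₑ ≠ ∞)
    (k : Fin d → ℤ) : Summable fun l => a l * b (k - l) := by
  refine Summable.of_norm (tsum_enorm_ne_top_iff_summable_norm.1 (ne_top_of_le_ne_top
    (ENNReal.mul_ne_top ha hb) ?_))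
  calc ∑' l, ‖a l * b (k - l)‖ₑ = econv (‖a ·‖ₑ) (‖b ·‖ₑ) k := tsum_congr fun _ => enorm_mul _ _
    _ ≤ ∑' k, econv (‖a ·‖ₑ) (‖b ·‖ₑ) k := ENNReal.le_tsum k
    _ = _ := tsum_econv _ _

theorem tsum_enorm_conjSeq (a : TSeq d) : ∑' k, ‖conjSeq d a k‖ₑ = ∑' k, ‖a k‖ₑ := by
  rw [← (Equiv.neg _).tsum_eq]
  simp [conjSeq]

theorem convSeq_sub_left {a b c : TSeq d} (ha : ∑' k, ‖a k‖ₑ ≠ ∞) (hb : ∑' k, ‖b k‖ₑ ≠ ∞)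
    (hc : ∑' k, ‖c k‖ₑ ≠ ∞) : convSeq d (a - b) c = convSeq d a c - convSeq d b c := by
  funext k
  simp only [convSeq, Pi.sub_apply, sub_mul]
  exact (summable_mul_sub ha hc k).tsum_sub (summable_mul_sub hb hc k)

theorem convSeq_sub_right {a b c : TSeq d} (ha : ∑' k, ‖a k‖ₑ ≠ ∞) (hb : ∑' k, ‖b k‖ₑ ≠ ∞)
    (hc : ∑' k, ‖c k‖ₑ ≠ ∞) : convSeq d a (b - c) = convSeq d a b - convSeq d a c := by
  funext k
  simp only [convSeq, Pi.sub_apply, mul_sub]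
  exact (summable_mul_sub ha hb k).tsum_sub (summable_mul_sub ha hc k)

theorem conjSeq_sub (a b : TSeq d) : conjSeq d (a - b) = conjSeq d a - conjSeq d b := by
  funext k
  simp [conjSeq]

def cubic (d : ℕ) (a : TSeq d) : TSeq d := convSeq d (convSeq d a a) (conjSeq d a)

theorem cubic_sub_cubic {v w : TSeq d} (hv : ∑' k, ‖v k‖ₑ ≠ ∞) (hw : ∑' k, ‖w k‖ₑ ≠ ∞) :
    cubic d v - cubic d w =
      convSeq d (convSeq d (v - w) v) (conjSeq d v) +
      convSeq d (convSeq d w (v - w)) (conjSeq d v) +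
      convSeq d (convSeq d w w) (conjSeq d (v - w)) := by
  have hconv : ∀ {a b : TSeq d}, ∑' k, ‖a k‖ₑ ≠ ∞ → ∑' k, ‖b k‖ₑ ≠ ∞ →
      ∑' k, ‖convSeq d a b k‖ₑ ≠ ∞ := fun ha hb =>
    ne_top_of_le_ne_top (ENNReal.mul_ne_top ha hb) (tsum_enorm_convSeq_le _ _)
  have hconj : ∀ {a : TSeq d}, ∑' k, ‖a k‖ₑ ≠ ∞ → ∑' k, ‖conjSeq d a k‖ₑ ≠ ∞ := fun ha =>
    (tsum_enorm_conjSeq _).trans_ne ha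
  rw [cubic, cubic, convSeq_sub_left hv hw hv, convSeq_sub_left (hconv hv hv) (hconv hw hv)
    (hconj hv), convSeq_sub_right hw hv hw, convSeq_sub_left (hconv hw hv) (hconv hw hw)
    (hconj hv), conjSeq_sub, convSeq_sub_right (hconv hw hw) (hconj hv) (hconj hw)]
  abel

def TrilinearBound (d : ℕ) (s σ : ℝ) (K : ℝ≥0∞) : Prop :=
  ∀ a b c : TSeq d, InHs d s a → InHs d σ b → InHs d σ c →
    sobolevSq s (econv (econv (‖a ·‖ₑ) (‖b ·‖ₑ)) (‖c ·‖ₑ)) ≤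
      K * ENNReal.ofReal (Hnorm d s a ^ 2 * Hnorm d σ b ^ 2 * Hnorm d σ c ^ 2)

theorem exists_trilinearBound {s σ : ℝ} (hs : 0 ≤ s) (hsσ : s ≤ σ) (hσ : (d : ℝ) / 2 < σ) :
    ∃ K, K ≠ ∞ ∧ TrilinearBound d s σ K := by
  have hS := bracketSum_ne_top hσ
  refine ⟨(8 * 4 ^ s * bracketSum d σ) ^ 2 * (2 ^ s * 2 ^ σ * 2 ^ σ), by finiteness,
    fun a b c ha hb hc => ?_⟩
  have hσ0 : 0 ≤ σ := hs.trans hsσ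
  calc _ ≤ (8 * 4 ^ s * bracketSum d σ) ^ 2 *
        (sobolevSq s (‖a ·‖ₑ) * sobolevSq σ (‖b ·‖ₑ) * sobolevSq σ (‖c ·‖ₑ)) :=
        sobolevSq_econv_econv_le hs hsσ _ _ _
    _ ≤ (8 * 4 ^ s * bracketSum d σ) ^ 2 *
        (2 ^ s * ENNReal.ofReal (Hnorm d s a ^ 2) * (2 ^ σ * ENNReal.ofReal (Hnorm d σ b ^ 2)) *
          (2 ^ σ * ENNReal.ofReal (Hnorm d σ c ^ 2))) := by
        gcongr
        · exact sobolevSq_le_ofReal_Hnorm_sq hs ha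
        · exact sobolevSq_le_ofReal_Hnorm_sq hσ0 hb
        · exact sobolevSq_le_ofReal_Hnorm_sq hσ0 hc
    _ = _ := by
        rw [ENNReal.ofReal_mul (by positivity), ENNReal.ofReal_mul (by positivity)]
        ring

theorem ofReal_Hnorm_cubic_sq_le {s σ : ℝ} {K : ℝ≥0∞} (hK : TrilinearBound d s σ K)
    (hs : 0 ≤ s) {w : TSeq d} (hws : InHs d s w) (hwσ : InHs d σ w) :
    ENNReal.ofReal (Hnorm d s (cubic d w) ^ 2) ≤
      2 * K * ENNReal.ofReal ((Hnorm d σ w ^ 2 * Hnorm d s w) ^ 2) :=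
  calc ENNReal.ofReal (Hnorm d s (cubic d w) ^ 2)
      ≤ 2 * sobolevSq s (‖cubic d w ·‖ₑ) := ofReal_Hnorm_sq_le hs _
    _ ≤ 2 * sobolevSq s (econv (econv (‖w ·‖ₑ) (‖w ·‖ₑ)) (‖conjSeq d w ·‖ₑ)) := by
        gcongr; exact sobolevSq_mono (enorm_convSeq_convSeq_le _ _ _)
    _ ≤ 2 * (K * ENNReal.ofReal (Hnorm d s w ^ 2 * Hnorm d σ w ^ 2 *
          Hnorm d σ (conjSeq d w) ^ 2)) := by
        gcongr; exact hK _ _ _ hws hwσ hwσ.conjSeq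
    _ = _ := by rw [Hnorm_conjSeq, ← mul_assoc]; ring_nf

theorem enorm_cubic_sub_cubic_le {v w : TSeq d} (hv : ∑' k, ‖v k‖ₑ ≠ ∞) (hw : ∑' k, ‖w k‖ₑ ≠ ∞)
    (k : Fin d → ℤ) :
    ‖(cubic d v - cubic d w) k‖ₑ ≤
      (econv (econv (‖(v - w) ·‖ₑ) (‖v ·‖ₑ)) (‖conjSeq d v ·‖ₑ) +
        econv (econv (‖(v - w) ·‖ₑ) (‖w ·‖ₑ)) (‖conjSeq d v ·‖ₑ) +
        econv (econv (‖conjSeq d (v - w) ·‖ₑ) (‖w ·‖ₑ)) (‖w ·‖ₑ)) k := by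
  rw [cubic_sub_cubic hv hw, econv_comm (‖(v - w) ·‖ₑ) (‖w ·‖ₑ),
    econv_assoc (‖conjSeq d (v - w) ·‖ₑ), econv_comm (‖conjSeq d (v - w) ·‖ₑ)]
  refine (enorm_add_le _ _).trans (add_le_add ((enorm_add_le _ _).trans (add_le_add ?_ ?_)) ?_) <;>
    exact enorm_convSeq_convSeq_le _ _ _ k

theorem ofReal_Hnorm_cubic_sub_cubic_sq_le {s σ : ℝ} {K : ℝ≥0∞} (hK : TrilinearBound d s σ K)
    (hs : 0 ≤ s) (hsσ : s ≤ σ) (hσ : (d : ℝ) / 2 < σ) {v w : TSeq d} (hv : InHs d σ v)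
    (hw : InHs d σ w) :
    ENNReal.ofReal (Hnorm d s (cubic d v - cubic d w) ^ 2) ≤
      8 * K * ENNReal.ofReal ((Hnorm d s (v - w) *
        (Hnorm d σ v ^ 2 + Hnorm d σ v * Hnorm d σ w + Hnorm d σ w ^ 2)) ^ 2) := by
  have hD := (hv.sub hw).mono hs hsσ
  set δ := Hnorm d s (v - w)
  set a := Hnorm d σ v
  set b := Hnorm d σ w
  have ha : 0 ≤ a := Hnorm_nonneg _ _
  have hb : 0 ≤ b := Hnorm_nonneg _ _
  have hpoly : δ ^ 2 * a ^ 2 * a ^ 2 + δ ^ 2 * b ^ 2 * a ^ 2 + δ ^ 2 * b ^ 2 * b ^ 2 ≤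
      (δ * (a ^ 2 + a * b + b ^ 2)) ^ 2 := by
    have : 0 ≤ δ ^ 2 * (a * b) * (a ^ 2 + a * b + b ^ 2) := by positivity
    nlinarith
  calc ENNReal.ofReal (Hnorm d s (cubic d v - cubic d w) ^ 2)
      ≤ 2 * sobolevSq s (‖(cubic d v - cubic d w) ·‖ₑ) := ofReal_Hnorm_sq_le hs _
    _ ≤ 2 * (4 * (sobolevSq s (econv (econv (‖(v - w) ·‖ₑ) (‖v ·‖ₑ)) (‖conjSeq d v ·‖ₑ)) +
          sobolevSq s (econv (econv (‖(v - w) ·‖ₑ) (‖w ·‖ₑ)) (‖conjSeq d v ·‖ₑ)) +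
          sobolevSq s (econv (econv (‖conjSeq d (v - w) ·‖ₑ) (‖w ·‖ₑ)) (‖w ·‖ₑ)))) := by
        grw [sobolevSq_mono (enorm_cubic_sub_cubic_le (tsum_enorm_ne_top_of_InHs hσ hv)
          (tsum_enorm_ne_top_of_InHs hσ hw)), sobolevSq_add_add_le]
    _ ≤ 2 * (4 * (K * ENNReal.ofReal (δ ^ 2 * a ^ 2 * a ^ 2) +
          K * ENNReal.ofReal (δ ^ 2 * b ^ 2 * a ^ 2) +
          K * ENNReal.ofReal (δ ^ 2 * b ^ 2 * b ^ 2))) := by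
        have hv' := hv.conjSeq
        gcongr
        · simpa only [Hnorm_conjSeq] using hK _ _ _ hD hv hv'
        · simpa only [Hnorm_conjSeq] using hK _ _ _ hD hw hv'
        · simpa only [Hnorm_conjSeq] using hK _ _ _ hD.conjSeq hw hw
    _ = 8 * K * ENNReal.ofReal (δ ^ 2 * a ^ 2 * a ^ 2 + δ ^ 2 * b ^ 2 * a ^ 2 +
          δ ^ 2 * b ^ 2 * b ^ 2) := by
        rw [ENNReal.ofReal_add (by positivity) (by positivity),
          ENNReal.ofReal_add (by positivity) (by positivity)]
        ring
    _ ≤ _ := by gcongr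

end SobolevTorus

open SobolevTorus in
theorem cubic_nonlinearity_estimates_general (d : ℕ) (s σ : ℝ)
    (hs : 0 ≤ s) (hσ : (d : ℝ) / 2 < σ)
    (hσ1 : s ≤ (d : ℝ) / 2 → s ≤ σ) (hσ2 : (d : ℝ) / 2 < s → σ = s) :
    ∃ c > (0 : ℝ), ∀ v w : TSeq d,
      InHs d (max s σ) v → InHs d (max s σ) w →
      Hnorm d s (convSeq d (convSeq d w w) (conjSeq d w)) ≤
          c * Hnorm d σ w ^ 2 * Hnorm d s w ∧
      Hnorm d s (convSeq d (convSeq d v v) (conjSeq d v)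
          - convSeq d (convSeq d w w) (conjSeq d w)) ≤
        c * Hnorm d s (v - w) *
          (Hnorm d σ v ^ 2 + Hnorm d σ v * Hnorm d σ w + Hnorm d σ w ^ 2) := by
  have hsσ : s ≤ σ := by
    rcases le_or_gt s (d / 2) with h | h
    · exact hσ1 h
    · exact (hσ2 h).ge
  obtain ⟨K, hK_top, hK⟩ := exists_trilinearBound hs hsσ hσ
  obtain ⟨c, hc, hKc⟩ := ENNReal.exists_pos_le_ofReal_sq (by finiteness : 8 * K ≠ ∞)
  refine ⟨c, hc, fun v w hv hw => ?_⟩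
  rw [max_eq_right hsσ] at hv hw
  have hv0 := Hnorm_nonneg σ v
  have hw0 := Hnorm_nonneg σ w
  constructor
  · rw [mul_assoc]
    refine ENNReal.le_mul_of_ofReal_sq_le (by have := Hnorm_nonneg s w; positivity) hc.le ?_
      (ofReal_Hnorm_cubic_sq_le hK hs (hw.mono hs hsσ) hw)
    exact le_trans (by gcongr; norm_num) hKc
  · rw [mul_assoc]
    exact ENNReal.le_mul_of_ofReal_sq_le (by have := Hnorm_nonneg s (v - w); positivity) hc.le hKc
      (ofReal_Hnorm_cubic_sub_cubic_sq_le hK hs hsσ hσ hv hw)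

/-- nonlinear estimates (18): bounds on the cubic nonlinearity
`w²w̄` in `H^s`, with `σ > d/2`, `σ ≥ s` if `s ≤ d/2`, and `σ = s` if `s > d/2`. -/
theorem cubic_nonlinearity_estimates (d : ℕ) (hd : 1 ≤ d) (s σ : ℝ)
    (hs : 0 ≤ s) (hσ : (d : ℝ) / 2 < σ)
    (hσ1 : s ≤ (d : ℝ) / 2 → s ≤ σ) (hσ2 : (d : ℝ) / 2 < s → σ = s) :
    ∃ c > (0 : ℝ), ∀ v w : TSeq d,
      InHs d (max s σ) v → InHs d (max s σ) w →
      Hnorm d s (convSeq d (convSeq d w w) (conjSeq d w)) ≤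
          c * Hnorm d σ w ^ 2 * Hnorm d s w ∧
      Hnorm d s (convSeq d (convSeq d v v) (conjSeq d v)
          - convSeq d (convSeq d w w) (conjSeq d w)) ≤
        c * Hnorm d s (v - w) *
          (Hnorm d σ v ^ 2 + Hnorm d σ v * Hnorm d σ w + Hnorm d σ w ^ 2) :=
  cubic_nonlinearity_estimates_general d s σ hs hσ hσ1 hσ2
end
end
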